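/- arXiv:2304.01960 — 5 statements merged into one kernel-verified Lean document; each statement's English description precedes it below -/
import Mathlib

section
/- Let φ : 𝔽₂[ξ₁, ξ₂, ξ₃, …] → 𝔽₂[χ₁, χ₂, χ₃, …]((z)) be the unique 𝔽₂-algebra homomorphism determined by φ(ξᵢ) = χᵢ·z^{2^i − 1} + χ_{i−1}·z^{−1} for all i ≥ 1, where by convention χ₀ = 1. Then φ is injective. -/
/-!
Every `φ (X i)` has order `-1` in `z` with leading coefficient `χ_{i-1}`, so a monomial `ξ^s`
goes to a Laurent series of order `-deg s` with leading coefficient `χ^{tail s}`, where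
`tail s` drops the exponent of `ξ₁`. Hence for `p ≠ 0` of total degree `m`, the coefficient
of `z^{-m}` in `φ p` is the dehomogenization `ξ₁ ↦ 1, ξᵢ ↦ χ_{i-1}` of the top
homogeneous component of `p`. Dehomogenization is injective on homogeneous polynomials of a
fixed degree, because `s` is recovered from `deg s` and `tail s`.
-/

open MvPolynomial

noncomputable section

/-- `chi 0 = 1` (the convention `χ₀ = 1`) and `chi (i+1)` is the variable `χ_{i+1}`. -/
def chi : ℕ → MvPolynomial ℕ (ZMod 2)
  | 0 => 1
  | i + 1 => X i

namespace HahnSeries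

theorem leadingCoeff_pow {Γ R : Type*} [AddCommMonoid Γ] [LinearOrder Γ]
    [IsOrderedCancelAddMonoid Γ] [Semiring R] [NoZeroDivisors R] (x : R⟦Γ⟧) (n : ℕ) :
    (x ^ n).leadingCoeff = x.leadingCoeff ^ n := by
  induction n with
  | zero => simp
  | succ n ih => rw [pow_succ, leadingCoeff_mul, ih, pow_succ]

theorem coeff_eq_leadingCoeff_of_orderTop_eq {Γ R : Type*} [PartialOrder Γ] [Zero R]
    {x : R⟦Γ⟧} {g : Γ} (h : x.orderTop = g) : x.coeff g = x.leadingCoeff := by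
  rw [← coeff_untop_eq_leadingCoeff (h ▸ WithTop.coe_ne_top)]
  simp [h]

end HahnSeries

theorem LaurentSeries.coeff_algebraMap_mul {R A : Type*} [CommSemiring R] [CommSemiring A]
    [Algebra R A] (r : R) (x : LaurentSeries A) (n : ℤ) :
    (algebraMap R (LaurentSeries A) r * x).coeff n = algebraMap R A r * x.coeff n := by
  rw [HahnSeries.algebraMap_apply', PowerSeries.algebraMap_apply, HahnSeries.ofPowerSeries_C,
    HahnSeries.C_mul_eq_smul, HahnSeries.coeff_smul, smul_eq_mul]

namespace MvPolynomial

lemma homogeneousComponent_totalDegree_ne_zero {σ R : Type*} [CommSemiring R]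
    {p : MvPolynomial σ R} (hp : p ≠ 0) : homogeneousComponent p.totalDegree p ≠ 0 := by
  obtain ⟨s, hs, hdeg⟩ := Finset.exists_mem_eq_sup p.support (support_nonempty.mpr hp)
    Finsupp.degree
  rw [← support_nonempty, support_homogeneousComponent]
  exact ⟨s, Finset.mem_filter.mpr ⟨hs, hdeg.symm⟩⟩

section LaurentSeries

open HahnSeries

variable {σ R A : Type*} [CommRing R] [CommRing A] [IsDomain A] [Algebra R A]
  (φ : MvPolynomial σ R →ₐ[R] LaurentSeries A)

theorem orderTop_map_monomial_one (hX : ∀ i, (φ (X i)).orderTop = ((-1 : ℤ) : WithTop ℤ))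
    (s : σ →₀ ℕ) : (φ (monomial s 1)).orderTop = (-s.degree : ℤ) := by
  induction s using Finsupp.induction with
  | zero => simp
  | single_add i e s _ _ ih =>
    rw [monomial_single_add, map_mul, map_pow, orderTop_mul, ← addVal_apply,
      AddValuation.map_pow, addVal_apply, hX, ih, map_add, Finsupp.degree_single,
      ← WithTop.coe_nsmul, ← WithTop.coe_add, Nat.cast_add, nsmul_eq_mul]
    congr 1
    ring

theorem leadingCoeff_map_monomial_one (c : σ → A)
    (hX : ∀ i, (φ (X i)).leadingCoeff = c i) (s : σ →₀ ℕ) :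
    (φ (monomial s 1)).leadingCoeff = aeval c (monomial s (1 : R)) := by
  induction s using Finsupp.induction with
  | zero => simp
  | single_add i e s _ _ ih =>
    simp only [monomial_single_add, map_mul, map_pow, leadingCoeff_mul, leadingCoeff_pow, hX, ih,
      aeval_X]

variable {φ} {c : σ → A} (hord : ∀ i, (φ (X i)).orderTop = ((-1 : ℤ) : WithTop ℤ))
  (hlc : ∀ i, (φ (X i)).leadingCoeff = c i)
include hord hlc

theorem coeff_map_monomial_of_degree_le {s : σ →₀ ℕ} {m : ℕ} (hs : s.degree ≤ m)
    (r : R) : (φ (monomial s r)).coeff (-m : ℤ) =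
      aeval c (homogeneousComponent m (monomial s r)) := by
  -- `C r * _` rather than `r • _`: the two `R`-actions on `LaurentSeries A` are not reducibly
  -- defeq, so `map_smul` does not apply to `φ`.
  rw [← mul_one r, ← C_mul_monomial, map_mul, homogeneousComponent_C_mul, map_mul, algHom_C,
    aeval_C, LaurentSeries.coeff_algebraMap_mul,
    homogeneousComponent_of_mem (isHomogeneous_monomial 1 rfl)]
  rcases hs.lt_or_eq with hlt | rfl
  · rw [if_neg hlt.ne', map_zero, mul_zero, coeff_eq_zero_of_lt_orderTop, mul_zero]
    rw [orderTop_map_monomial_one φ hord]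
    exact_mod_cast neg_lt_neg (Nat.cast_lt.mpr hlt)
  · rw [if_pos rfl, coeff_eq_leadingCoeff_of_orderTop_eq (orderTop_map_monomial_one φ hord s),
      leadingCoeff_map_monomial_one φ c hlc]

theorem coeff_map_of_totalDegree_le {p : MvPolynomial σ R} {m : ℕ} (hp : p.totalDegree ≤ m) :
    (φ p).coeff (-m : ℤ) = aeval c (homogeneousComponent m p) := by
  conv_lhs => rw [p.as_sum]
  conv_rhs => rw [p.as_sum]
  simp only [map_sum, HahnSeries.coeff_sum]
  exact Finset.sum_congr rfl fun s hs ↦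
    coeff_map_monomial_of_degree_le hord hlc ((le_totalDegree hs).trans hp) _

theorem injective_of_orderTop_X_of_leadingCoeff_X
    (hc : ∀ m (q : MvPolynomial σ R), q.IsHomogeneous m → aeval c q = 0 → q = 0) :
    Function.Injective φ := by
  refine (injective_iff_map_eq_zero φ).mpr fun p hp ↦ ?_
  by_contra hp0
  have htop := coeff_map_of_totalDegree_le hord hlc (le_refl p.totalDegree)
  rw [hp, HahnSeries.coeff_zero, eq_comm] at htop
  exact homogeneousComponent_totalDegree_ne_zero hp0
    (hc _ _ (homogeneousComponent_isHomogeneous _ _) htop)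

end LaurentSeries

end MvPolynomial

namespace Finsupp

def natTail : (ℕ →₀ ℕ) →+ (ℕ →₀ ℕ) := comapDomain.addMonoidHom Nat.succ_injective

@[simp] lemma natTail_apply (s : ℕ →₀ ℕ) (i : ℕ) : natTail s i = s (i + 1) := rfl

lemma natTail_single_zero (e : ℕ) : natTail (single 0 e) = 0 := by
  ext i; simp

lemma natTail_single_succ (i e : ℕ) : natTail (single (i + 1) e) = single i e := by
  ext j; simp [single_apply]

lemma degree_eq_apply_zero_add_degree_natTail (s : ℕ →₀ ℕ) :
    s.degree = s 0 + (natTail s).degree := by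
  induction s using Finsupp.induction with
  | zero => simp
  | single_add i e s _ _ ih =>
    rw [map_add, map_add, map_add, ih, add_apply]
    cases i <;> simp [natTail_single_zero, natTail_single_succ, add_assoc, add_left_comm]

lemma eq_of_degree_eq_of_natTail_eq {s t : ℕ →₀ ℕ} (hdeg : s.degree = t.degree)
    (htail : natTail s = natTail t) : s = t := by
  ext (_ | i)
  · have hs := degree_eq_apply_zero_add_degree_natTail s
    have ht := degree_eq_apply_zero_add_degree_natTail t
    rw [htail] at hs
    omega
  · simpa using DFunLike.congr_fun htail i

end Finsupp

lemma chi_pow (i e : ℕ) : chi i ^ e = monomial (Finsupp.natTail (Finsupp.single i e)) 1 := by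
  cases i with
  | zero => simp [chi, Finsupp.natTail_single_zero]
  | succ i => rw [chi, Finsupp.natTail_single_succ, X_pow_eq_monomial]

lemma aeval_chi_monomial (s : ℕ →₀ ℕ) (r : ZMod 2) :
    aeval chi (monomial s r) = monomial (Finsupp.natTail s) r := by
  induction s using Finsupp.induction with
  | zero => simp
  | single_add i e s _ _ ih =>
    rw [monomial_single_add, map_mul, map_pow, aeval_X, ih, chi_pow, monomial_mul, one_mul,
      map_add]

lemma coeff_natTail_aeval_chi {p : MvPolynomial ℕ (ZMod 2)} {m : ℕ} (hp : p.IsHomogeneous m)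
    {s : ℕ →₀ ℕ} (hs : s.degree = m) :
    coeff (Finsupp.natTail s) (aeval chi p) = coeff s p := by
  conv_lhs => rw [p.as_sum]
  simp only [map_sum, aeval_chi_monomial, coeff_sum, coeff_monomial]
  have htail (t) (ht : t ∈ p.support) : Finsupp.natTail t = Finsupp.natTail s ↔ t = s := by
    have hdeg : t.degree = s.degree := by
      rw [hs, Finsupp.degree_eq_weight_one]
      exact hp (mem_support_iff.mp ht)
    exact ⟨Finsupp.eq_of_degree_eq_of_natTail_eq hdeg, congrArg _⟩
  rw [Finset.sum_congr rfl fun t ht ↦ if_congr (htail t ht) rfl rfl, Finset.sum_ite_eq',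
    ite_eq_left_iff, notMem_support_iff]
  exact fun h ↦ h.symm

lemma eq_zero_of_aeval_chi_eq_zero {p : MvPolynomial ℕ (ZMod 2)} {m : ℕ}
    (hp : p.IsHomogeneous m) (h : aeval chi p = 0) : p = 0 := by
  ext s
  by_cases hs : s.degree = m
  · rw [← coeff_natTail_aeval_chi hp hs, h, coeff_zero, coeff_zero]
  · rw [hp.coeff_eq_zero hs, coeff_zero]

lemma chi_ne_zero (i : ℕ) : chi i ≠ 0 := by
  cases i with
  | zero => exact one_ne_zero
  | succ i => exact X_ne_zero i

theorem stmt_0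
    (φ : MvPolynomial ℕ (ZMod 2) →ₐ[ZMod 2] LaurentSeries (MvPolynomial ℕ (ZMod 2)))
    (hφ : ∀ i : ℕ, φ (X i) =
      HahnSeries.single ((2 ^ (i + 1) : ℤ) - 1) (chi (i + 1)) +
        HahnSeries.single (-1 : ℤ) (chi i)) :
    Function.Injective φ := by
  have hlt (i : ℕ) : (HahnSeries.single (-1 : ℤ) (chi i)).orderTop <
      (HahnSeries.single ((2 ^ (i + 1) : ℤ) - 1) (chi (i + 1))).orderTop := by
    rw [HahnSeries.orderTop_single (chi_ne_zero _), HahnSeries.orderTop_single (chi_ne_zero _)]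
    have hpow : (0 : ℤ) < 2 ^ (i + 1) := by positivity
    exact_mod_cast show (-1 : ℤ) < 2 ^ (i + 1) - 1 by linarith
  refine injective_of_orderTop_X_of_leadingCoeff_X (c := chi) (fun i ↦ ?_) (fun i ↦ ?_)
    fun _ _ ↦ eq_zero_of_aeval_chi_eq_zero
  · rw [hφ, HahnSeries.orderTop_add_eq_right (hlt i), HahnSeries.orderTop_single (chi_ne_zero i)]
  · rw [hφ, HahnSeries.leadingCoeff_add_eq_right (hlt i), HahnSeries.leadingCoeff_of_single]

end
end

section
/- Grade the polynomial ring A = 𝔽₂[ξ₁, ξ₂, ξ₃, …] by assigning ξᵢ degree 2^i − 1. If p ∈ A is homogeneous of degree j ≠ 0 and φ(p) lies in the power series subring 𝔽₂[χ₁, χ₂, …][[z]] ⊆ 𝔽₂[χ₁, χ₂, …]((z)) (i.e., the coefficient of zⁿ in φ(p) vanishes for every n < 0), then p = 0. Consequently the map (q, p) ↦ q + φ(p) from 𝔽₂[χ₁, χ₂, …][[z]] ⊕ A to 𝔽₂[χ₁, χ₂, …]((z)) is injective on homogeneous elements of nonzero degree. -/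
/-!
STATEMENT 1: Grading `𝔽₂[ξ₁, ξ₂, …]` by `deg ξᵢ = 2^i − 1`, if `p` is homogeneous of degree
`j ≠ 0` and `φ(p)` has no negative-degree Laurent coefficients, then `p = 0`; consequently
`(q, p) ↦ q + φ(p)` is injective on homogeneous elements of nonzero degree.

Here `X i` stands for `ξ_{i+1}` (resp. `χ_{i+1}`), `φ(ξᵢ) = χᵢ·z^{2^i−1} + χ_{i−1}·z^{−1}`
with `χ₀ = 1`, and `HahnSeries.single n c` is `c·zⁿ` in `LaurentSeries = HahnSeries ℤ`.
-/

open MvPolynomial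

noncomputable section

/-!
Write `φ(ξᵢ) = z⁻¹ (χ_{i-1} + χᵢ z^{2^i})`. A monomial of total degree `k` is sent to `z^{-k}` times
a power series whose constant term is the monomial evaluated at `ξᵢ ↦ χ_{i-1}`. Hence the
coefficient of `z^{-m}` in `φ(p)`, for `m` the total degree of `p`, is the top homogeneous component
of `p` under the dehomogenization `ξᵢ ↦ χ_{i-1}` (so `ξ₁ ↦ 1`), which is injective on homogeneous
polynomials of a fixed degree. A nonzero `p`, homogeneous of nonzero weighted degree, is not
constant, so `m > 0` and `φ(p)` has a nonzero coefficient at the negative power `z^{-m}`.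
-/

namespace Finsupp

variable {M : Type*}

theorem degree_eq_apply_zero_add_degree_comapDomain_succ [AddCommMonoid M] (α : ℕ →₀ M) :
    α.degree = α 0 + (α.comapDomain Nat.succ Nat.succ_injective.injOn).degree := by
  induction α using Finsupp.induction with
  | zero => simp
  | single_add a b f _ _ ih =>
    rw [comapDomain_add_of_injective Nat.succ_injective, map_add, map_add, ih, add_apply]
    have hsingle : (single a b).comapDomain Nat.succ Nat.succ_injective.injOn =
        if a = 0 then 0 else single (a - 1) b := by
      ext j
      rcases a with _ | i <;> simp [single_apply]
    rcases a with _ | i <;> simp [hsingle, add_assoc, add_left_comm]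

theorem eq_of_comapDomain_succ_eq_of_degree_eq [AddCancelCommMonoid M] {α β : ℕ →₀ M}
    (htail : α.comapDomain Nat.succ Nat.succ_injective.injOn =
      β.comapDomain Nat.succ Nat.succ_injective.injOn)
    (hdeg : α.degree = β.degree) : α = β := by
  rw [degree_eq_apply_zero_add_degree_comapDomain_succ,
    degree_eq_apply_zero_add_degree_comapDomain_succ β, htail] at hdeg
  ext i
  rcases i with _ | i
  · exact add_right_cancel hdeg
  · exact DFunLike.congr_fun htail i

end Finsupp

namespace MvPolynomial

variable {σ R : Type*} [CommSemiring R]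

theorem IsHomogeneous.aeval_mul_left {S : Type*} [CommSemiring S] [Algebra R S]
    {q : MvPolynomial σ R} {k : ℕ} (hq : q.IsHomogeneous k) (u : S) (g : σ → S) :
    MvPolynomial.aeval (fun i => u * g i) q = u ^ k * MvPolynomial.aeval g q := by
  rw [q.as_sum, map_sum, map_sum, Finset.mul_sum]
  refine Finset.sum_congr rfl fun d hd => ?_
  have hdeg : d.degree = k := by
    rw [Finsupp.degree_eq_weight_one]; exact hq (mem_support_iff.mp hd)
  simp only [aeval_monomial, mul_pow, Finsupp.prod_mul]
  rw [Finsupp.prod, Finset.prod_pow_eq_pow_sum, ← Finsupp.degree_apply, hdeg]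
  ring

theorem coeff_aeval_single_neg_one_mul_ofPowerSeries {A : Type*} [CommSemiring A] [Algebra R A]
    (G : σ → PowerSeries A) (p : MvPolynomial σ R) :
    (aeval (fun i => HahnSeries.single (-1 : ℤ) (1 : A) * HahnSeries.ofPowerSeries ℤ A (G i))
        p).coeff (-p.totalDegree) =
      aeval (fun i => PowerSeries.constantCoeff (G i)) (homogeneousComponent p.totalDegree p) := by
  set m := p.totalDegree
  have hcomponent (k : ℕ) :
      (aeval (fun i => HahnSeries.single (-1 : ℤ) (1 : A) * HahnSeries.ofPowerSeries ℤ A (G i))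
        (homogeneousComponent k p)).coeff (-m) =
      if k < m then 0 else PowerSeries.coeff (k - m) (aeval G (homogeneousComponent k p)) := by
    have hofPowerSeries : aeval (fun i => HahnSeries.ofPowerSeries ℤ A (G i))
        (homogeneousComponent k p) =
        HahnSeries.ofPowerSeries ℤ A (aeval G (homogeneousComponent k p)) := by
      rw [map_aeval, aeval_eq_eval₂Hom]
      rfl
    rw [(homogeneousComponent_isHomogeneous k p).aeval_mul_left, HahnSeries.single_pow, one_pow,
      HahnSeries.coeff_single_mul, one_mul, hofPowerSeries, PowerSeries.coeff_coe, nsmul_eq_mul,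
      mul_neg_one, sub_neg_eq_add]
    split_ifs with hneg hlt hlt
    · rfl
    · omega
    · omega
    · congr
      omega
  conv_lhs => rw [← sum_homogeneousComponent p]
  rw [map_sum, HahnSeries.coeff_sum, Finset.sum_eq_single m]
  · rw [hcomponent, if_neg (lt_irrefl m), Nat.sub_self,
      PowerSeries.coeff_zero_eq_constantCoeff_apply, map_aeval]
    rfl
  · intro k hk _
    rw [hcomponent, if_pos (by have := Finset.mem_range.mp hk; omega)]
  · exact fun h => absurd (Finset.self_mem_range_succ m) h

theorem IsWeightedHomogeneous.totalDegree_ne_zero {M : Type*} [AddCommMonoid M] {w : σ → M}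
    {p : MvPolynomial σ R} {j : M}
    (hp : p.IsWeightedHomogeneous w j) (hj : j ≠ 0) (hp0 : p ≠ 0) : p.totalDegree ≠ 0 := by
  intro hdeg
  rw [totalDegree_eq_zero_iff_eq_C] at hdeg
  rw [hdeg] at hp hp0
  exact hj (hp.inj_right hp0 (isWeightedHomogeneous_C w _))

end MvPolynomial

theorem prod_chi_pow (α : ℕ →₀ ℕ) :
    (α.prod fun i k => chi i ^ k) =
      monomial (α.comapDomain Nat.succ Nat.succ_injective.injOn) 1 := by
  induction α using Finsupp.induction with
  | zero => simp
  | single_add a b f _ _ ih =>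
    rw [Finsupp.prod_add_index' (fun _ => pow_zero _) (fun _ _ _ => pow_add _ _ _),
      Finsupp.prod_single_index (h := fun i k => chi i ^ k) (pow_zero _), ih,
      Finsupp.comapDomain_add_of_injective Nat.succ_injective, ← mul_one (1 : ZMod 2),
      ← monomial_mul]
    congr 1
    rcases a with _ | i
    · simp [chi]
    · simp [chi, X_pow_eq_monomial]

theorem aeval_chi_monomial_s1 (α : ℕ →₀ ℕ) (c : ZMod 2) :
    aeval chi (monomial α c) = monomial (α.comapDomain Nat.succ Nat.succ_injective.injOn) c := by
  rw [aeval_monomial, prod_chi_pow, algebraMap_eq, C_mul_monomial, mul_one]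

theorem coeff_comapDomain_succ_aeval_chi {q : MvPolynomial ℕ (ZMod 2)} {m : ℕ}
    (hq : q.IsHomogeneous m) {α : ℕ →₀ ℕ} (hα : α.degree = m) :
    coeff (α.comapDomain Nat.succ Nat.succ_injective.injOn) (aeval chi q) = coeff α q := by
  conv_lhs => rw [q.as_sum]
  simp only [map_sum, coeff_sum, aeval_chi_monomial_s1, coeff_monomial]
  rw [Finset.sum_eq_single α]
  · rw [if_pos rfl]
  · intro β hβ hne
    refine if_neg fun htail => hne (Finsupp.eq_of_comapDomain_succ_eq_of_degree_eq htail ?_)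
    rw [hα, Finsupp.degree_apply, ← hq.degree_eq_sum_deg_support hβ]
  · intro hα'
    rw [if_pos rfl, notMem_support_iff.mp hα']

/-- The power series `z · φ(ξ_{i+1}) = χᵢ + χ_{i+1} z^{2^{i+1}}`. -/
def zMulPhiX (i : ℕ) : PowerSeries (MvPolynomial ℕ (ZMod 2)) :=
  PowerSeries.C (chi i) + PowerSeries.C (chi (i + 1)) * PowerSeries.X ^ 2 ^ (i + 1)

theorem constantCoeff_zMulPhiX (i : ℕ) : PowerSeries.constantCoeff (zMulPhiX i) = chi i := by
  simp [zMulPhiX]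

theorem single_neg_one_mul_zMulPhiX (i : ℕ) :
    HahnSeries.single (-1 : ℤ) 1 * HahnSeries.ofPowerSeries ℤ _ (zMulPhiX i) =
      HahnSeries.single ((2 ^ (i + 1) : ℤ) - 1) (chi (i + 1)) +
        HahnSeries.single (-1 : ℤ) (chi i) := by
  simp only [zMulPhiX, map_add, map_mul, HahnSeries.ofPowerSeries_C,
    HahnSeries.ofPowerSeries_X_pow, HahnSeries.C_apply, mul_add, HahnSeries.single_mul_single,
    one_mul, mul_one]
  rw [add_comm]
  push_cast
  ring_nf

def phi : MvPolynomial ℕ (ZMod 2) →ₐ[ZMod 2] LaurentSeries (MvPolynomial ℕ (ZMod 2)) :=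
  aeval fun i => HahnSeries.single (-1 : ℤ) 1 * HahnSeries.ofPowerSeries ℤ _ (zMulPhiX i)

theorem coeff_phi_neg_totalDegree_ne_zero {p : MvPolynomial ℕ (ZMod 2)}
    (hm : p.totalDegree ≠ 0) : (phi p).coeff (-p.totalDegree) ≠ 0 := by
  obtain ⟨α, hα, hdeg⟩ := Finset.exists_mem_eq_sup p.support
    (support_nonempty.mpr fun h => hm (h ▸ totalDegree_zero)) fun α => α.degree
  replace hdeg : α.degree = p.totalDegree := hdeg.symm
  rw [phi, coeff_aeval_single_neg_one_mul_ofPowerSeries, funext constantCoeff_zMulPhiX]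
  intro h
  have := coeff_comapDomain_succ_aeval_chi (homogeneousComponent_isHomogeneous _ p) hdeg
  rw [h, coeff_zero, coeff_homogeneousComponent, if_pos hdeg] at this
  exact mem_support_iff.mp hα this.symm

theorem eq_phi {φ : MvPolynomial ℕ (ZMod 2) →ₐ[ZMod 2] LaurentSeries (MvPolynomial ℕ (ZMod 2))}
    (hφ : ∀ i : ℕ, φ (X i) =
      HahnSeries.single ((2 ^ (i + 1) : ℤ) - 1) (chi (i + 1)) +
        HahnSeries.single (-1 : ℤ) (chi i)) :
    φ = phi :=
  algHom_ext fun i => by rw [hφ, phi, aeval_X, single_neg_one_mul_zMulPhiX]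

theorem eq_zero_of_coeff_phi_neg_eq_zero {M : Type*} [AddCommMonoid M] {w : ℕ → M} {j : M}
    {p : MvPolynomial ℕ (ZMod 2)} (hj : j ≠ 0) (hp : p.IsWeightedHomogeneous w j)
    (hcoeff : ∀ n : ℤ, n < 0 → (phi p).coeff n = 0) : p = 0 := by
  by_contra hp0
  have hdeg := hp.totalDegree_ne_zero hj hp0
  exact coeff_phi_neg_totalDegree_ne_zero hdeg (hcoeff _ (by omega))

theorem stmt_1
    (φ : MvPolynomial ℕ (ZMod 2) →ₐ[ZMod 2] LaurentSeries (MvPolynomial ℕ (ZMod 2)))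
    (hφ : ∀ i : ℕ, φ (X i) =
      HahnSeries.single ((2 ^ (i + 1) : ℤ) - 1) (chi (i + 1)) +
        HahnSeries.single (-1 : ℤ) (chi i)) :
    (∀ (p : MvPolynomial ℕ (ZMod 2)) (j : ℕ), j ≠ 0 →
      MvPolynomial.IsWeightedHomogeneous (fun i : ℕ => 2 ^ (i + 1) - 1) p j →
      (∀ n : ℤ, n < 0 → (φ p).coeff n = 0) → p = 0) ∧
    (∀ (q q' : LaurentSeries (MvPolynomial ℕ (ZMod 2)))
        (p p' : MvPolynomial ℕ (ZMod 2)) (j : ℕ), j ≠ 0 →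
      (∀ n : ℤ, n < 0 → q.coeff n = 0) → (∀ n : ℤ, n < 0 → q'.coeff n = 0) →
      MvPolynomial.IsWeightedHomogeneous (fun i : ℕ => 2 ^ (i + 1) - 1) p j →
      MvPolynomial.IsWeightedHomogeneous (fun i : ℕ => 2 ^ (i + 1) - 1) p' j →
      q + φ p = q' + φ p' → q = q' ∧ p = p') := by
  obtain rfl := eq_phi hφ
  refine ⟨fun p j hj hp hcoeff => eq_zero_of_coeff_phi_neg_eq_zero hj hp hcoeff,
    fun q q' p p' j hj hq hq' hp hp' heq => ?_⟩
  have hdiff : phi (p - p') = q' - q := by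
    rw [map_sub]
    linear_combination heq
  obtain rfl : p = p' := sub_eq_zero.mp <|
    eq_zero_of_coeff_phi_neg_eq_zero hj (hp.sub hp') fun n hn => by
      rw [hdiff, HahnSeries.coeff_sub, hq n hn, hq' n hn, sub_zero]
  exact ⟨add_right_cancel heq, rfl⟩

end
end

section
/- Let P = 𝔽₂[g₁, g₂, g₃, …][ρ, x₁, v₁] be a polynomial ring over 𝔽₂ (in the paper g₁ is written ζ₁² and gᵢ is written ζᵢ for i ≥ 2), and let d be the unique 𝔽₂-linear derivation of P with d(g₁) = ρv₁, d(g₂) = x₁v₁, and d(gᵢ) = 0 for i ≥ 3, d(ρ) = d(x₁) = d(v₁) = 0. Then d ∘ d = 0, and the homology ker(d)/im(d) is isomorphic as an 𝔽₂-algebra to 𝔽₂[b₁, b₂, g₃, g₄, …][ρ, x₁, x₂, v₁]/(ρv₁, x₁v₁, x₂v₁, x₂² + ρ²b₂ + x₁²b₁), via the map sending b₁ ↦ [g₁²], b₂ ↦ [g₂²], gᵢ ↦ [gᵢ] for i ≥ 3, ρ ↦ [ρ], x₁ ↦ [x₁], x₂ ↦ [x₁g₁ + ρg₂], v₁ ↦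 [v₁]. -/
/-!
STATEMENT 8: In `P = 𝔽₂[g₁, g₂, …][ρ, x₁, v₁]` with the derivation `d` determined by
`d(g₁) = ρv₁`, `d(g₂) = x₁v₁` and `d = 0` on all other variables, we have `d ∘ d = 0` and
`ker(d)/im(d) ≅ 𝔽₂[b₁, b₂, g₃, g₄, …][ρ, x₁, x₂, v₁]/(ρv₁, x₁v₁, x₂v₁, x₂² + ρ²b₂ + x₁²b₁)`
via `b₁ ↦ [g₁²]`, `b₂ ↦ [g₂²]`, `gᵢ ↦ [gᵢ]`, `x₂ ↦ [x₁g₁ + ρg₂]`, and identity on the rest.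

We model `P` with variable set `ℕ ⊕ Fin 3` (`Sum.inl i = g_{i+1}`; `Sum.inr 0, 1, 2 =
ρ, x₁, v₁`) and the presented source with variable set `ℕ ⊕ Fin 4` (`Sum.inl 0, 1 = b₁, b₂`,
`Sum.inl (i+2) = g_{i+3}`; `Sum.inr 0, 1, 2, 3 = ρ, x₁, x₂, v₁`).  The isomorphism claim is
stated extensionally: the comparison map `ψ` lands in cycles, hits every cycle modulo
boundaries, and has the relations ideal as its kernel modulo boundaries.
-/

open MvPolynomial

noncomputable section

namespace Stmt8

abbrev P := MvPolynomial (ℕ ⊕ Fin 3) (ZMod 2)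
abbrev Q := MvPolynomial (ℕ ⊕ Fin 4) (ZMod 2)

-- variables of `P`
def g (i : ℕ) : P := X (Sum.inl i)     -- `g (i)` is `g_{i+1}`
def ρ : P := X (Sum.inr 0)
def x₁ : P := X (Sum.inr 1)
def v₁ : P := X (Sum.inr 2)

-- variables of the presented source `Q`
def b₁' : Q := X (Sum.inl 0)
def b₂' : Q := X (Sum.inl 1)
def g' (i : ℕ) : Q := X (Sum.inl (i + 2))   -- `g' i` is `g_{i+3}`
def ρ' : Q := X (Sum.inr 0)
def x₁' : Q := X (Sum.inr 1)
def x₂' : Q := X (Sum.inr 2)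
def v₁' : Q := X (Sum.inr 3)

/-- the comparison map `b₁ ↦ g₁², b₂ ↦ g₂², gᵢ ↦ gᵢ, ρ ↦ ρ, x₁ ↦ x₁,
`x₂ ↦ x₁g₁ + ρg₂`, `v₁ ↦ v₁`. -/
def ψ : Q →ₐ[ZMod 2] P :=
  aeval (Sum.elim
    (fun i : ℕ => match i with
      | 0 => g 0 ^ 2
      | 1 => g 1 ^ 2
      | (i + 2) => g (i + 2))
    ![ρ, x₁, x₁ * g 0 + ρ * g 1, v₁])

/-- the relations ideal `(ρv₁, x₁v₁, x₂v₁, x₂² + ρ²b₂ + x₁²b₁)`. -/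
def J : Ideal Q := Ideal.span
  {ρ' * v₁', x₁' * v₁', x₂' * v₁', x₂' ^ 2 + ρ' ^ 2 * b₂' + x₁' ^ 2 * b₁'}

end Stmt8

/-!
Let `∂₁, ∂₂` be the partial derivatives in `g₁, g₂`. In characteristic 2 they are commuting
square-zero derivations, so `P` is free over their common kernel
`K = 𝔽₂[g₁², g₂², g₃, …][ρ, x₁, v₁]` with basis `1, g₁, g₂, g₁g₂`, and `d = ρv₁∂₁ + x₁v₁∂₂` is
`K`-linear: `d(A + g₁B + g₂C + g₁g₂E) = v₁(ρB + x₁C) + g₁·x₁v₁E + g₂·ρv₁E`.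
Hence a cycle has `E = 0` and `ρB = x₁C`, so `B = x₁t`, `C = ρt`, and it equals
`A + t(x₁g₁ + ρg₂)`, an image under `ψ`. Modulo the relations every element of the source is
`a + b·x₂` with `a, b` free of `x₂`; if its image is a boundary, comparing components puts `a` in
`v₁(ρ, x₁)` and `b` in `(v₁)`. That `ψ` is injective on the `x₂`-free part follows because
squaring the remaining variables as well turns it into the Frobenius.
-/

namespace Derivation

theorem map_map_mul_of_charTwo {R A : Type*} [CommRing R] [CommRing A] [Algebra R A]
    [CharP A 2] (D : Derivation R A A) (a b : A) :
    D (D (a * b)) = D (D a) * b + a * D (D b) := by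
  simp only [leibniz, smul_eq_mul, map_add]
  linear_combination (D a * D b) * CharTwo.two_eq_zero (R := A)

end Derivation

namespace MvPolynomial

variable {σ R : Type*} [CommRing R]

theorem derivation_map_map_eq_zero [CharP R 2]
    (D : Derivation R (MvPolynomial σ R) (MvPolynomial σ R)) (h : ∀ i, D (D (X i)) = 0)
    (f : MvPolynomial σ R) : D (D f) = 0 := by
  induction f using induction_on with
  | C a => rw [← algebraMap_eq, D.map_algebraMap, map_zero]
  | add f g hf hg => rw [map_add, map_add, hf, hg, add_zero]
  | mul_X f i hf => rw [D.map_map_mul_of_charTwo, hf, h, zero_mul, mul_zero, add_zero]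

theorem pderiv_pderiv_X (i j k : σ) : pderiv i (pderiv j (X k : MvPolynomial σ R)) = 0 := by
  classical
  rw [pderiv_X]
  by_cases hjk : j = k <;> simp [hjk]

theorem pderiv_pderiv_self [CharP R 2] (i : σ) (f : MvPolynomial σ R) :
    pderiv i (pderiv i f) = 0 :=
  derivation_map_map_eq_zero _ (pderiv_pderiv_X i i) f

theorem pderiv_comm (i j : σ) (f : MvPolynomial σ R) :
    pderiv i (pderiv j f) = pderiv j (pderiv i f) := by
  have h : ⁅pderiv i, pderiv j⁆ = (0 : Derivation R (MvPolynomial σ R) _) :=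
    derivation_ext fun k => by
      rw [Derivation.commutator_apply, pderiv_pderiv_X, pderiv_pderiv_X, sub_zero,
        Derivation.zero_apply]
  have := DFunLike.congr_fun h f
  rwa [Derivation.commutator_apply, Derivation.zero_apply, sub_eq_zero] at this

def pderivConstants (s : Set σ) : Subalgebra R (MvPolynomial σ R) where
  carrier := {f | ∀ i ∈ s, pderiv i f = 0}
  mul_mem' ha hb i hi := by simp [ha i hi, hb i hi]
  add_mem' ha hb i hi := by simp [ha i hi, hb i hi]
  algebraMap_mem' r i _ := (pderiv i).map_algebraMap r

theorem mem_pderivConstants {s : Set σ} {f : MvPolynomial σ R} :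
    f ∈ pderivConstants s ↔ ∀ i ∈ s, pderiv i f = 0 := Iff.rfl

theorem mem_pderivConstants_pair {i j : σ} {f : MvPolynomial σ R} :
    f ∈ pderivConstants {i, j} ↔ pderiv i f = 0 ∧ pderiv j f = 0 := by
  simp [mem_pderivConstants]

theorem mem_pderivConstants_of_X_mul_mem [IsDomain R] {s : Set σ} {j : σ} {f : MvPolynomial σ R}
    (hj : j ∉ s) (h : X j * f ∈ pderivConstants s) : f ∈ pderivConstants s := by
  intro i hi
  have := h i hi
  rw [pderiv_mul, pderiv_X_of_ne (ne_of_mem_of_not_mem hi hj).symm, zero_mul, zero_add] at this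
  exact (mul_eq_zero.1 this).resolve_left (X_ne_zero j)

section Decomposition

variable {i j : σ} {A B C E : MvPolynomial σ R}

theorem eq_zero_of_add_X_mul_eq_zero (hij : i ≠ j) (hA : A ∈ pderivConstants {i, j})
    (hB : B ∈ pderivConstants {i, j}) (hC : C ∈ pderivConstants {i, j})
    (hE : E ∈ pderivConstants {i, j}) (h : A + X i * B + X j * C + X i * X j * E = 0) :
    A = 0 ∧ B = 0 ∧ C = 0 ∧ E = 0 := by
  rw [mem_pderivConstants_pair] at hA hB hC hE
  have hCE : C + X i * E = 0 := by
    have := congrArg (pderiv j) h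
    simp [pderiv_X_of_ne hij, hA.2, hB.2, hC.2, hE.2] at this
    linear_combination this
  have hE0 : E = 0 := by
    simpa [hC.1, hE.1] using congrArg (pderiv i) hCE
  have hB0 : B = 0 := by
    simpa [pderiv_X_of_ne hij.symm, hA.1, hB.1, hC.1, hE.1, hE0] using congrArg (pderiv i) h
  have hC0 : C = 0 := by simpa [hE0] using hCE
  exact ⟨by simpa [hB0, hC0, hE0] using h, hB0, hC0, hE0⟩

/-- Since `∂ᵢ² = ∂ⱼ² = 0`, the components are `E = ∂ᵢ∂ⱼf`, `B = ∂ᵢf - X j E` and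
`C = ∂ⱼf - X i E`. -/
theorem exists_eq_add_X_mul [CharP R 2] (hij : i ≠ j) (f : MvPolynomial σ R) :
    ∃ A ∈ pderivConstants {i, j}, ∃ B ∈ pderivConstants {i, j}, ∃ C ∈ pderivConstants {i, j},
      ∃ E ∈ pderivConstants {i, j}, f = A + X i * B + X j * C + X i * X j * E ∧
        pderiv i f = B + X j * E ∧ pderiv j f = C + X i * E := by
  set E := pderiv i (pderiv j f) with hE
  have hEi : pderiv i E = 0 := pderiv_pderiv_self i _
  have hEj : pderiv j E = 0 := by rw [hE, pderiv_comm, pderiv_pderiv_self, map_zero]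
  have hBi : pderiv i (pderiv i f - X j * E) = 0 := by
    simp [pderiv_X_of_ne hij.symm, pderiv_pderiv_self, hEi]
  have hBj : pderiv j (pderiv i f - X j * E) = 0 := by
    rw [map_sub, pderiv_mul, pderiv_comm, ← hE, hEj, pderiv_X_self]; ring
  have hCi : pderiv i (pderiv j f - X i * E) = 0 := by
    rw [map_sub, pderiv_mul, ← hE, hEi, pderiv_X_self]; ring
  have hCj : pderiv j (pderiv j f - X i * E) = 0 := by
    simp [pderiv_X_of_ne hij, pderiv_pderiv_self, hEj]
  refine ⟨f - X i * (pderiv i f - X j * E) - X j * (pderiv j f - X i * E) - X i * X j * E, ?_,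
    _, mem_pderivConstants_pair.2 ⟨hBi, hBj⟩, _, mem_pderivConstants_pair.2 ⟨hCi, hCj⟩,
    E, mem_pderivConstants_pair.2 ⟨hEi, hEj⟩, by ring, by ring, by ring⟩
  rw [mem_pderivConstants_pair]
  constructor
  · simp [pderiv_X_of_ne hij.symm, hBi, hCi, hEi]; ring
  · simp [pderiv_X_of_ne hij, hBj, hCj, hEj]; ring

theorem exists_of_X_mul_add_X_mul_eq_zero [IsDomain R] (hij : i ≠ j)
    (h : X i * B + X j * C = 0) : ∃ t, B = X j * t ∧ C = -(X i * t) := by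
  have hdvd : X j ∣ X i * B := ⟨-C, by linear_combination h⟩
  obtain ⟨t, rfl⟩ := (X_prime.dvd_or_dvd hdvd).resolve_left (by simpa using hij.symm)
  refine ⟨t, rfl, ?_⟩
  have : X j * (C + X i * t) = 0 := by linear_combination h
  linear_combination (mul_eq_zero.1 this).resolve_left (X_ne_zero j)

end Decomposition

section ExpandOn

variable (p : ℕ) (s : Set σ)

open Classical in
def expandOn : MvPolynomial σ R →ₐ[R] MvPolynomial σ R :=
  aeval fun i => if i ∈ s then X i ^ p else X i

variable {p s}

theorem expandOn_X_of_mem {i : σ} (hi : i ∈ s) :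
    expandOn p s (X i : MvPolynomial σ R) = X i ^ p := by
  simp [expandOn, hi]

theorem expandOn_X_of_notMem {i : σ} (hi : i ∉ s) :
    expandOn p s (X i : MvPolynomial σ R) = X i := by
  simp [expandOn, hi]

theorem expandOn_compl_comp_expandOn :
    (expandOn p sᶜ).comp (expandOn p s) = (expand p : MvPolynomial σ R →ₐ[R] _) := by
  refine algHom_ext fun i => ?_
  by_cases hi : i ∈ s
  · simp [expandOn_X_of_mem hi, expandOn_X_of_notMem (Set.notMem_compl_iff.2 hi)]
  · simp [expandOn_X_of_notMem hi, expandOn_X_of_mem (Set.mem_compl hi)]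

theorem range_expandOn_le_pderivConstants [CharP R p] :
    (expandOn p s).range ≤ (pderivConstants s : Subalgebra R (MvPolynomial σ R)) := by
  rw [expandOn, aeval_range, Algebra.adjoin_le_iff]
  rintro _ ⟨k, rfl⟩ i hi
  dsimp only
  split_ifs with hk
  · simp
  · exact pderiv_X_of_ne (ne_of_mem_of_not_mem hi hk).symm

variable [Fact p.Prime]

theorem expandOn_injective :
    Function.Injective (expandOn p s : MvPolynomial σ (ZMod p) → MvPolynomial σ (ZMod p)) := by
  refine (injective_iff_map_eq_zero _).2 fun f hf => ?_
  have : f ^ p = 0 := by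
    rw [← expand_zmod, ← expandOn_compl_comp_expandOn (s := s), AlgHom.comp_apply, hf, map_zero]
  exact pow_eq_zero_iff (Fact.out : p.Prime).ne_zero |>.1 this

theorem dvd_of_pderiv_eq_zero {f : MvPolynomial σ (ZMod p)} {i : σ} (hf : pderiv i f = 0)
    {m : σ →₀ ℕ} (hm : m ∈ f.support) : p ∣ m i := by
  rcases Nat.eq_zero_or_pos (m i) with h0 | hpos
  · rw [h0]; exact dvd_zero p
  set m' := m - Finsupp.single i 1
  have hm' : m' + Finsupp.single i 1 = m := tsub_add_cancel_of_le (Finsupp.single_le_iff.2 hpos)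
  have hmi : ((m' i : ℕ) : ZMod p) + 1 = (m i : ℕ) := by
    rw [← hm']; simp
  have hcoeff := coeff_pderiv (i := i) f m'
  rw [hf, coeff_zero, hm', hmi] at hcoeff
  rw [← ZMod.natCast_eq_zero_iff]
  exact (mul_eq_zero.1 hcoeff.symm).resolve_left (mem_support_iff.1 hm)

theorem exists_expandOn_eq_of_mem {f : MvPolynomial σ (ZMod p)} (hf : f ∈ pderivConstants s) :
    ∃ g, expandOn p s g = f := by
  suffices f ∈ (expandOn p s).range from this
  rw [f.as_sum]
  refine Subalgebra.sum_mem _ fun m hm => ?_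
  rw [monomial_eq]
  refine Subalgebra.mul_mem _ (Subalgebra.algebraMap_mem _ _) (Subalgebra.prod_mem _ ?_)
  intro k _
  by_cases hk : k ∈ s
  · obtain ⟨e, he⟩ := dvd_of_pderiv_eq_zero (hf k hk) hm
    exact ⟨X k ^ e, by simp [expandOn_X_of_mem hk, he, pow_mul]⟩
  · exact ⟨X k ^ m k, by simp [expandOn_X_of_notMem hk]⟩

end ExpandOn

end MvPolynomial

namespace Stmt8

/-- The `x₂`-free part of `Q`, with `g₁, g₂` renamed to `b₁, b₂`, so that `ψ ∘ κ` squares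
`g₁, g₂`. -/
def κ : P →ₐ[ZMod 2] Q := rename (Sum.map id ![0, 1, 3])

abbrev gPair : Set (ℕ ⊕ Fin 3) := {Sum.inl 0, Sum.inl 1}

@[simp] lemma κ_g_zero : κ (g 0) = b₁' := by simp [κ, g, b₁']
@[simp] lemma κ_g_one : κ (g 1) = b₂' := by simp [κ, g, b₂']
@[simp] lemma κ_ρ : κ ρ = ρ' := by simp [κ, ρ, ρ']
@[simp] lemma κ_x₁ : κ x₁ = x₁' := by simp [κ, x₁, x₁']
@[simp] lemma κ_v₁ : κ v₁ = v₁' := by simp [κ, v₁, v₁']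

@[simp] lemma ψ_b₁' : ψ b₁' = g 0 ^ 2 := by simp [ψ, b₁']
@[simp] lemma ψ_b₂' : ψ b₂' = g 1 ^ 2 := by simp [ψ, b₂']
@[simp] lemma ψ_ρ' : ψ ρ' = ρ := by simp [ψ, ρ']
@[simp] lemma ψ_x₁' : ψ x₁' = x₁ := by simp [ψ, x₁']
@[simp] lemma ψ_x₂' : ψ x₂' = x₁ * g 0 + ρ * g 1 := by simp [ψ, x₂']
@[simp] lemma ψ_v₁' : ψ v₁' = v₁ := by simp [ψ, v₁']

lemma ψ_κ (f : P) : ψ (κ f) = expandOn 2 gPair f := by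
  refine congrArg (· f) (algHom_ext fun k => ?_ : ψ.comp κ = expandOn 2 gPair)
  rcases k with (_ | _ | n) | k
  · simp [κ, ψ, g, expandOn_X_of_mem]
  · simp [κ, ψ, g, expandOn_X_of_mem]
  · simp [κ, ψ, g, expandOn_X_of_notMem]
  · fin_cases k <;> simp [κ, ψ, ρ, x₁, v₁, expandOn_X_of_notMem]

@[simp] lemma expandOn_ρ : expandOn 2 gPair ρ = ρ := expandOn_X_of_notMem (by simp)
@[simp] lemma expandOn_x₁ : expandOn 2 gPair x₁ = x₁ := expandOn_X_of_notMem (by simp)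
@[simp] lemma expandOn_v₁ : expandOn 2 gPair v₁ = v₁ := expandOn_X_of_notMem (by simp)

lemma ρ_mem : ρ ∈ pderivConstants gPair := range_expandOn_le_pderivConstants ⟨ρ, by simp⟩
lemma x₁_mem : x₁ ∈ pderivConstants gPair := range_expandOn_le_pderivConstants ⟨x₁, by simp⟩
lemma v₁_mem : v₁ ∈ pderivConstants gPair := range_expandOn_le_pderivConstants ⟨v₁, by simp⟩

lemma ρ_mul_v₁_mem_J : ρ' * v₁' ∈ J := Ideal.subset_span (by simp)
lemma x₁_mul_v₁_mem_J : x₁' * v₁' ∈ J := Ideal.subset_span (by simp)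
lemma x₂_mul_v₁_mem_J : x₂' * v₁' ∈ J := Ideal.subset_span (by simp)
lemma x₂_sq_add_mem_J : x₂' ^ 2 + ρ' ^ 2 * b₂' + x₁' ^ 2 * b₁' ∈ J := Ideal.subset_span (by simp)

lemma exists_κ_X_eq {k : ℕ ⊕ Fin 4} (hk : k ≠ Sum.inr 2) : ∃ k', κ (X k') = X k := by
  rcases k with n | k
  · exact ⟨Sum.inl n, rename_X _ _⟩
  · fin_cases k
    exacts [⟨Sum.inr 0, rename_X _ _⟩, ⟨Sum.inr 1, rename_X _ _⟩, absurd rfl hk,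
      ⟨Sum.inr 2, rename_X _ _⟩]

lemma exists_sub_mem_J (q : Q) : ∃ a b : P, q - (κ a + κ b * x₂') ∈ J := by
  induction q using induction_on with
  | C c => exact ⟨C c, 0, by simp [κ]⟩
  | add q q' ih ih' =>
    obtain ⟨a, b, h⟩ := ih
    obtain ⟨a', b', h'⟩ := ih'
    exact ⟨a + a', b + b', by convert J.add_mem h h' using 1; simp only [map_add]; ring⟩
  | mul_X q k ih =>
    obtain ⟨a, b, h⟩ := ih
    by_cases hk : k = Sum.inr 2
    · subst hk
      -- `x₂² ≡ ρ²b₂ + x₁²b₁` modulo `J`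
      refine ⟨b * (ρ ^ 2 * g 1 + x₁ ^ 2 * g 0), a, ?_⟩
      convert J.add_mem (J.mul_mem_right (X (Sum.inr 2)) h) (J.mul_mem_left (κ b) x₂_sq_add_mem_J)
        using 1
      simp only [map_mul, map_add, map_pow, κ_ρ, κ_x₁, κ_g_zero, κ_g_one, x₂']
      linear_combination (-(κ b * (ρ' ^ 2 * b₂' + x₁' ^ 2 * b₁'))) * CharTwo.two_eq_zero (R := Q)
    · obtain ⟨k', hk'⟩ := exists_κ_X_eq hk
      refine ⟨a * X k', b * X k', ?_⟩
      convert J.mul_mem_right (X k) h using 1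
      rw [map_mul, map_mul, hk']
      ring

def δ : Derivation (ZMod 2) P P := (ρ * v₁) • pderiv (Sum.inl 0) + (x₁ * v₁) • pderiv (Sum.inl 1)

lemma δ_apply (f : P) :
    δ f = ρ * v₁ * pderiv (Sum.inl 0) f + x₁ * v₁ * pderiv (Sum.inl 1) f := rfl

lemma eq_δ {d : Derivation (ZMod 2) P P} (hg1 : d (g 0) = ρ * v₁) (hg2 : d (g 1) = x₁ * v₁)
    (hg : ∀ i : ℕ, d (g (i + 2)) = 0) (hρ : d ρ = 0) (hx₁ : d x₁ = 0) (hv₁ : d v₁ = 0) :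
    d = δ := by
  refine derivation_ext fun k => ?_
  rcases k with (_ | _ | n) | k
  · simpa [δ_apply, g, ρ, v₁] using hg1
  · simpa [δ_apply, g, x₁, v₁] using hg2
  · simpa [δ_apply, g] using hg n
  · fin_cases k
    · simpa [δ_apply, ρ] using hρ
    · simpa [δ_apply, x₁] using hx₁
    · simpa [δ_apply, v₁] using hv₁

lemma δ_δ (f : P) : δ (δ f) = 0 :=
  derivation_map_map_eq_zero δ (fun k => by
    simp [δ_apply, ρ, x₁, v₁, -pderiv_X, pderiv_pderiv_X, pderiv_X_of_ne]) f

lemma δ_eq_zero_of_mem {f : P} (hf : f ∈ pderivConstants gPair) : δ f = 0 := by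
  simp [δ_apply, hf (Sum.inl 0) (by simp), hf (Sum.inl 1) (by simp)]

@[simp] lemma δ_g_zero : δ (g 0) = ρ * v₁ := by simp [δ_apply, g]
@[simp] lemma δ_g_one : δ (g 1) = x₁ * v₁ := by simp [δ_apply, g]

lemma δ_ψ_X (k : ℕ ⊕ Fin 4) : δ (ψ (X k)) = 0 := by
  by_cases hk : k = Sum.inr 2
  · subst hk
    change δ (ψ x₂') = 0
    simp only [ψ_x₂', map_add, Derivation.leibniz, smul_eq_mul, δ_g_zero, δ_g_one,
      δ_eq_zero_of_mem ρ_mem, δ_eq_zero_of_mem x₁_mem]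
    linear_combination (x₁ * ρ * v₁) * CharTwo.two_eq_zero (R := P)
  · obtain ⟨k', hk'⟩ := exists_κ_X_eq hk
    rw [← hk', ψ_κ]
    exact δ_eq_zero_of_mem (range_expandOn_le_pderivConstants ⟨X k', rfl⟩)

lemma δ_ψ (q : Q) : δ (ψ q) = 0 := by
  induction q using induction_on with
  | C c => rw [← algebraMap_eq, AlgHom.commutes, δ.map_algebraMap]
  | add q q' ih ih' => rw [map_add, map_add, ih, ih', add_zero]
  | mul_X q k ih => rw [map_mul, Derivation.leibniz, ih, δ_ψ_X, smul_zero, smul_zero, add_zero]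

lemma exists_ψ_eq_δ_of_mem_J {q : Q} (hq : q ∈ J) : ∃ r, ψ q = δ r := by
  induction hq using Submodule.span_induction with
  | mem x hx =>
    simp only [Set.mem_insert_iff, Set.mem_singleton_iff] at hx
    rcases hx with rfl | rfl | rfl | rfl
    · exact ⟨g 0, by simp⟩
    · exact ⟨g 1, by simp⟩
    · exact ⟨g 0 * g 1, by simp [Derivation.leibniz]; ring⟩
    · refine ⟨0, ?_⟩
      simp only [map_add, map_mul, map_pow, ψ_x₂', ψ_ρ', ψ_x₁', ψ_b₁', ψ_b₂', map_zero]
      linear_combination (x₁ * g 0 * ρ * g 1 + ρ ^ 2 * g 1 ^ 2 + x₁ ^ 2 * g 0 ^ 2) *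
        CharTwo.two_eq_zero (R := P)
  | zero => exact ⟨0, by simp⟩
  | add x y _ _ hx hy =>
    obtain ⟨r, hr⟩ := hx
    obtain ⟨r', hr'⟩ := hy
    exact ⟨r + r', by rw [map_add, map_add, hr, hr']⟩
  | smul z x _ hx =>
    obtain ⟨r, hr⟩ := hx
    exact ⟨ψ z * r, by simp [hr, Derivation.leibniz, δ_ψ]⟩

lemma exists_decomposition (f : P) :
    ∃ A ∈ pderivConstants gPair, ∃ B ∈ pderivConstants gPair, ∃ C ∈ pderivConstants gPair,
      ∃ E ∈ pderivConstants gPair, f = A + g 0 * B + g 1 * C + g 0 * g 1 * E ∧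
        δ f = v₁ * (ρ * B + x₁ * C) + g 0 * (x₁ * v₁ * E) + g 1 * (ρ * v₁ * E) := by
  obtain ⟨A, hA, B, hB, C, hC, E, hE, hf, h₀, h₁⟩ :=
    exists_eq_add_X_mul (i := Sum.inl 0) (j := Sum.inl 1) (by simp) f
  refine ⟨A, hA, B, hB, C, hC, E, hE, hf, ?_⟩
  rw [δ_apply, h₀, h₁, g, g]
  ring

lemma eq_zero_of_add_g_mul_eq_zero {A B C E : P} (hA : A ∈ pderivConstants gPair)
    (hB : B ∈ pderivConstants gPair) (hC : C ∈ pderivConstants gPair)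
    (hE : E ∈ pderivConstants gPair) (h : A + g 0 * B + g 1 * C + g 0 * g 1 * E = 0) :
    A = 0 ∧ B = 0 ∧ C = 0 ∧ E = 0 :=
  eq_zero_of_add_X_mul_eq_zero (by simp) hA hB hC hE h

lemma exists_ψ_eq_of_δ_eq_zero {f : P} (hf : δ f = 0) : ∃ q, ψ q = f := by
  obtain ⟨A, hA, B, hB, C, hC, E, hE, rfl, hδ⟩ := exists_decomposition f
  obtain ⟨hBC, hE₀, -, -⟩ := eq_zero_of_add_g_mul_eq_zero
    (mul_mem v₁_mem (add_mem (mul_mem ρ_mem hB) (mul_mem x₁_mem hC)))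
    (mul_mem (mul_mem x₁_mem v₁_mem) hE) (mul_mem (mul_mem ρ_mem v₁_mem) hE) (zero_mem _)
    (by rw [mul_zero, add_zero, ← hδ, hf])
  obtain rfl : E = 0 := by simpa [x₁, v₁, X_ne_zero] using hE₀
  obtain ⟨t, rfl, rfl⟩ : ∃ t, B = x₁ * t ∧ C = -(ρ * t) :=
    exists_of_X_mul_add_X_mul_eq_zero (by simp) ((mul_eq_zero.1 hBC).resolve_left (X_ne_zero _))
  have ht : t ∈ pderivConstants gPair := mem_pderivConstants_of_X_mul_mem (by simp) hB
  obtain ⟨a, rfl⟩ := exists_expandOn_eq_of_mem hA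
  obtain ⟨b, rfl⟩ := exists_expandOn_eq_of_mem ht
  refine ⟨κ a + κ b * x₂', ?_⟩
  rw [map_add, map_mul, ψ_κ, ψ_κ, ψ_x₂']
  linear_combination (ρ * expandOn 2 gPair b * g 1) * CharTwo.two_eq_zero (R := P)

lemma mem_J_of_ψ_eq_δ {q : Q} {r : P} (h : ψ q = δ r) : q ∈ J := by
  obtain ⟨a, b, hab⟩ := exists_sub_mem_J q
  obtain ⟨r₁, hr₁⟩ := exists_ψ_eq_δ_of_mem_J hab
  obtain ⟨-, -, B, hB, C, hC, E, hE, -, hδ⟩ := exists_decomposition (r - r₁)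
  have hσa : expandOn 2 gPair a ∈ pderivConstants gPair :=
    range_expandOn_le_pderivConstants ⟨a, rfl⟩
  have hσb : expandOn 2 gPair b ∈ pderivConstants gPair :=
    range_expandOn_le_pderivConstants ⟨b, rfl⟩
  obtain ⟨ha, hb, -, -⟩ := eq_zero_of_add_g_mul_eq_zero
    (sub_mem hσa (mul_mem v₁_mem (add_mem (mul_mem ρ_mem hB) (mul_mem x₁_mem hC))))
    (mul_mem x₁_mem (sub_mem hσb (mul_mem v₁_mem hE)))
    (mul_mem ρ_mem (sub_mem hσb (mul_mem v₁_mem hE))) (zero_mem _) (by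
      rw [map_sub, h, map_add, map_mul, ψ_κ, ψ_κ, ψ_x₂'] at hr₁
      rw [map_sub] at hδ
      linear_combination hδ - hr₁)
  obtain ⟨β, rfl⟩ := exists_expandOn_eq_of_mem hB
  obtain ⟨γ, rfl⟩ := exists_expandOn_eq_of_mem hC
  obtain ⟨ε, rfl⟩ := exists_expandOn_eq_of_mem hE
  obtain rfl : a = v₁ * (ρ * β + x₁ * γ) :=
    expandOn_injective (s := gPair) (by simpa [sub_eq_zero] using ha)
  obtain rfl : b = v₁ * ε := expandOn_injective (s := gPair) <| by
    simpa [sub_eq_zero] using (mul_eq_zero.1 hb).resolve_left (X_ne_zero _)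
  convert J.add_mem hab (J.add_mem (J.add_mem (J.mul_mem_left (κ β) ρ_mul_v₁_mem_J)
    (J.mul_mem_left (κ γ) x₁_mul_v₁_mem_J)) (J.mul_mem_left (κ ε) x₂_mul_v₁_mem_J)) using 1
  simp only [map_mul, map_add, κ_ρ, κ_x₁, κ_v₁]
  ring

theorem stmt_8
    (d : Derivation (ZMod 2) P P)
    (hg1 : d (g 0) = ρ * v₁)
    (hg2 : d (g 1) = x₁ * v₁)
    (hg : ∀ i : ℕ, d (g (i + 2)) = 0)
    (hρ : d ρ = 0) (hx₁ : d x₁ = 0) (hv₁ : d v₁ = 0) :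
    (∀ p : P, d (d p) = 0) ∧
    (∀ q : Q, d (ψ q) = 0) ∧
    (∀ p : P, d p = 0 → ∃ (q : Q) (r : P), p = ψ q + d r) ∧
    (∀ q : Q, (∃ r : P, ψ q = d r) ↔ q ∈ J) := by
  obtain rfl := eq_δ hg1 hg2 hg hρ hx₁ hv₁
  refine ⟨δ_δ, δ_ψ, fun p hp => ?_, fun q => ⟨fun ⟨r, hr⟩ => mem_J_of_ψ_eq_δ hr,
    exists_ψ_eq_δ_of_mem_J⟩⟩
  obtain ⟨q, rfl⟩ := exists_ψ_eq_of_δ_eq_zero hp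
  exact ⟨q, 0, by rw [map_zero, add_zero]⟩

end Stmt8

end
end

section
/- Let P = 𝔽₂[b₁, b₂, c₃, c₄, …][ρ, x₁, x₂, v₁, v₂] be a polynomial ring over 𝔽₂, weighted-graded by assigning weight 0 to each bᵢ and cᵢ, weight −1 to ρ, x₁ and x₂, weight 1 to v₁, and weight 3 to v₂. Let J ⊆ P be the ideal generated by the homogeneous elements ρv₁, x₁v₁, x₂v₁ and x₂² + ρ²b₂ + x₁²b₁. Then every weighted-homogeneous element f ∈ P of weight ≤ 0 that lies in the ideal J + (v₁) already lies in J. Equivalently, the quotient map from P/J to P/(J + (v₁)) is injective (hence an isomorphism) on all weighted-homogeneous components of weight ≤ 0. -/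
/-!
STATEMENT 10: In `P = 𝔽₂[b₁, b₂, c₃, c₄, …][ρ, x₁, x₂, v₁, v₂]`, weighted-graded with the
`bᵢ, cᵢ` of weight `0`, `ρ, x₁, x₂` of weight `−1`, `v₁` of weight `1`, `v₂` of weight `3`,
and `J = (ρv₁, x₁v₁, x₂v₁, x₂² + ρ²b₂ + x₁²b₁)`: every weighted-homogeneous `f` of weight
`≤ 0` lying in `J + (v₁)` already lies in `J`.

We model `P` with variable set `ℕ ⊕ Fin 5` (`Sum.inl 0, 1 = b₁, b₂`, `Sum.inl (k+2) =
c_{k+3}`; `Sum.inr 0,…,4 = ρ, x₁, x₂, v₁, v₂`).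
-/

open MvPolynomial

noncomputable section

namespace Stmt10

abbrev P := MvPolynomial (ℕ ⊕ Fin 5) (ZMod 2)

def b₁ : P := X (Sum.inl 0)
def b₂ : P := X (Sum.inl 1)
def c (k : ℕ) : P := X (Sum.inl (k + 2))   -- `c k` is `c_{k+3}`
def ρ : P := X (Sum.inr 0)
def x₁ : P := X (Sum.inr 1)
def x₂ : P := X (Sum.inr 2)
def v₁ : P := X (Sum.inr 3)
def v₂ : P := X (Sum.inr 4)

/-- the weights: `bᵢ, cᵢ ↦ 0`; `ρ, x₁, x₂ ↦ −1`; `v₁ ↦ 1`; `v₂ ↦ 3`. -/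
def w : ℕ ⊕ Fin 5 → ℤ := Sum.elim (fun _ => 0) ![-1, -1, -1, 1, 3]

/-- the ideal `J = (ρv₁, x₁v₁, x₂v₁, x₂² + ρ²b₂ + x₁²b₁)`. -/
def J : Ideal P := Ideal.span
  {ρ * v₁, x₁ * v₁, x₂ * v₁, x₂ ^ 2 + ρ ^ 2 * b₂ + x₁ ^ 2 * b₁}


end Stmt10

/-! Since `J` is generated by weighted-homogeneous elements, the weight-`k` part of
`f = j + a v₁` is `j_k + a_{k-1} v₁` with `j_k ∈ J`. For `k ≤ 0` the polynomial `a_{k-1}` has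
negative weight, so every monomial of it is divisible by `ρ`, `x₁` or `x₂`, and each of these
is killed by `v₁` modulo `J`. -/

lemma Finsupp.exists_ne_zero_and_neg_of_weight_neg {σ M : Type*} [AddCommMonoid M]
    [LinearOrder M] [IsOrderedAddMonoid M] {w : σ → M} {d : σ →₀ ℕ} (hd : Finsupp.weight w d < 0) :
    ∃ i, d i ≠ 0 ∧ w i < 0 := by
  by_contra! h
  refine hd.not_ge ?_
  rw [Finsupp.weight_apply]
  exact Finset.sum_nonneg fun i hi => nsmul_nonneg (h i (Finsupp.mem_support_iff.mp hi)) _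

namespace MvPolynomial

variable {σ R M : Type*} [CommSemiring R]

lemma IsWeightedHomogeneous.mem_span_X_of_neg [AddCommMonoid M] [LinearOrder M]
    [IsOrderedAddMonoid M] {w : σ → M} {p : MvPolynomial σ R} {m : M}
    (hp : p.IsWeightedHomogeneous w m) (hm : m < 0) :
    p ∈ Ideal.span (X '' {i | w i < 0}) := by
  rw [← p.support_sum_monomial_coeff]
  refine Ideal.sum_mem _ fun d hd => ?_
  obtain ⟨i, hdi, hwi⟩ := Finsupp.exists_ne_zero_and_neg_of_weight_neg
    ((hp (mem_support_iff.mp hd)).trans_lt hm)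
  obtain ⟨q, hq⟩ := (X_dvd_monomial (r := coeff d p)).mpr (Or.inr hdi)
  rw [hq]
  exact Ideal.mul_mem_right q _ (Ideal.subset_span ⟨i, hwi, rfl⟩)

lemma weightedHomogeneousComponent_add_mul_of_isWeightedHomogeneous [AddCancelCommMonoid M]
    {w : σ → M} {a b : MvPolynomial σ R} {i j : M} (hb : b.IsWeightedHomogeneous w j) :
    weightedHomogeneousComponent w (i + j) (a * b) = weightedHomogeneousComponent w i a * b := by
  classical
  let _ := weightedGradedAlgebra R w
  simp_rw [← weightedDecomposition.decompose'_apply]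
  exact DirectSum.coe_decompose_mul_add_of_right_mem (weightedHomogeneousSubmodule R w)
    ((mem_weightedHomogeneousSubmodule R w j b).mpr hb)

end MvPolynomial

namespace Stmt10

section

attribute [local instance] MvPolynomial.weightedGradedAlgebra

lemma J_isHomogeneous : J.IsHomogeneous (weightedHomogeneousSubmodule (ZMod 2) w) := by
  refine Ideal.homogeneous_span _ _ ?_
  have hX := isWeightedHomogeneous_X (ZMod 2) w
  rintro p (rfl | rfl | rfl | rfl)
  · exact ⟨_, (hX _).mul (hX _)⟩
  · exact ⟨_, (hX _).mul (hX _)⟩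
  · exact ⟨_, (hX _).mul (hX _)⟩
  · exact ⟨_, (((hX _).pow 2).add (((hX _).pow 2).mul (hX (Sum.inl 1)))).add
      (((hX _).pow 2).mul (hX (Sum.inl 0)))⟩

end

lemma X_mul_v₁_mem_J {i : ℕ ⊕ Fin 5} (hi : w i < 0) : X i * v₁ ∈ J := by
  rcases i with n | j
  · exact (lt_irrefl 0 hi).elim
  · fin_cases j
    · exact Ideal.subset_span (Set.mem_insert _ _)
    · exact Ideal.subset_span (Set.mem_insert_of_mem _ (Set.mem_insert _ _))
    · exact Ideal.subset_span
        (Set.mem_insert_of_mem _ (Set.mem_insert_of_mem _ (Set.mem_insert _ _)))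
    · exact absurd hi (by decide)
    · exact absurd hi (by decide)

lemma mul_v₁_mem_J {p : P} (hp : p ∈ Ideal.span (X '' {i | w i < 0})) : p * v₁ ∈ J := by
  have hspan : Ideal.span (X '' {i | w i < 0}) ≤ J.colon {v₁} := Ideal.span_le.mpr <| by
    rintro _ ⟨i, hi, rfl⟩
    exact Submodule.mem_colon_singleton.mpr (X_mul_v₁_mem_J hi)
  exact Submodule.mem_colon_singleton.mp (hspan hp)

theorem stmt_10 :
    ∀ (f : P) (k : ℤ), k ≤ 0 → MvPolynomial.IsWeightedHomogeneous w f k →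
      f ∈ J ⊔ Ideal.span {v₁} → f ∈ J := by
  intro f k hk hf hmem
  obtain ⟨j, hj, _, hv, rfl⟩ := Submodule.mem_sup.mp hmem
  obtain ⟨a, rfl⟩ := Ideal.mem_span_singleton'.mp hv
  have hv₁ : v₁.IsWeightedHomogeneous w 1 := isWeightedHomogeneous_X _ w _
  rw [← hf.weightedHomogeneousComponent_same, map_add, ← sub_add_cancel k 1,
    weightedHomogeneousComponent_add_mul_of_isWeightedHomogeneous hv₁]
  exact J.add_mem (weightedHomogeneousComponent_mem_of_mem _ _ J_isHomogeneous hj _)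
    (mul_v₁_mem_J ((weightedHomogeneousComponent_isWeightedHomogeneous _ _).mem_span_X_of_neg
      (by omega)))

end Stmt10

end
end

section
/- Let E be the quotient of the polynomial ring 𝔽₂[B₁, C₂, C₃, C₄, c₅, c₆, …][ρ, x₁, x₂, x₃, x₄, u] by the ideal generated by the ten elements: x₂⁴ + B₁x₁⁴; x₃⁴ + B₁²x₂⁴ + C₂x₁⁴; x₄² + x₁²C₃ + x₂²C₂ + x₃²B₁²; x₁⁷u; (x₂⁷ + x₁⁶x₄ + x₁⁴x₂x₃² + x₁²x₂⁴x₃)u; ρx₁⁶u; ρ³x₁⁴u; (x₁⁵x₃² + x₁x₂⁶)u; (ρx₁⁴x₃² + ρx₂⁶)u; and (x₁⁴x₃²x₄ + x₂⁶x₄ + x₂⁴x₃³ + x₁⁴x₂²x₃B₁² + x₁⁶x₂C₂)u. Then the annihilator of the class of ρ⁷u in E is exactly the principal ideal generated by (the class of) x₁⁴. -/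
/-!
STATEMENT 18: Let `E` be the quotient of `𝔽₂[B₁, C₂, C₃, C₄, c₅, c₆, …][ρ, x₁, x₂, x₃, x₄, u]`
by the ideal generated by the ten elements
`x₂⁴ + B₁x₁⁴`; `x₃⁴ + B₁²x₂⁴ + C₂x₁⁴`; `x₄² + x₁²C₃ + x₂²C₂ + x₃²B₁²`; `x₁⁷u`;
`(x₂⁷ + x₁⁶x₄ + x₁⁴x₂x₃² + x₁²x₂⁴x₃)u`; `ρx₁⁶u`; `ρ³x₁⁴u`; `(x₁⁵x₃² + x₁x₂⁶)u`;
`(ρx₁⁴x₃² + ρx₂⁶)u`; `(x₁⁴x₃²x₄ + x₂⁶x₄ + x₂⁴x₃³ + x₁⁴x₂²x₃B₁² + x₁⁶x₂C₂)u`.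
Then the annihilator of the class of `ρ⁷u` in `E` is exactly the principal ideal generated
by (the class of) `x₁⁴`.

We model the ambient polynomial ring with variable set `ℕ ⊕ Fin 6` (`Sum.inl 0, 1, 2, 3 =
B₁, C₂, C₃, C₄`, `Sum.inl (k+4) = c_{k+5}`; `Sum.inr 0,…,5 = ρ, x₁, x₂, x₃, x₄, u`).
-/

open MvPolynomial

set_option synthInstance.maxHeartbeats 1000000
set_option maxHeartbeats 1000000

noncomputable section

namespace Stmt18

abbrev P := MvPolynomial (ℕ ⊕ Fin 6) (ZMod 2)

def B₁ : P := X (Sum.inl 0)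
def C₂ : P := X (Sum.inl 1)
def C₃ : P := X (Sum.inl 2)
def C₄ : P := X (Sum.inl 3)
def c (k : ℕ) : P := X (Sum.inl (k + 4))   -- `c k` is `c_{k+5}`
def ρ : P := X (Sum.inr 0)
def x₁ : P := X (Sum.inr 1)
def x₂ : P := X (Sum.inr 2)
def x₃ : P := X (Sum.inr 3)
def x₄ : P := X (Sum.inr 4)
def u : P := X (Sum.inr 5)

/-- the ideal generated by the ten listed elements. -/
def J : Ideal P := Ideal.span
  {x₂ ^ 4 + B₁ * x₁ ^ 4,
   x₃ ^ 4 + B₁ ^ 2 * x₂ ^ 4 + C₂ * x₁ ^ 4,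
   x₄ ^ 2 + x₁ ^ 2 * C₃ + x₂ ^ 2 * C₂ + x₃ ^ 2 * B₁ ^ 2,
   x₁ ^ 7 * u,
   (x₂ ^ 7 + x₁ ^ 6 * x₄ + x₁ ^ 4 * x₂ * x₃ ^ 2 + x₁ ^ 2 * x₂ ^ 4 * x₃) * u,
   ρ * x₁ ^ 6 * u,
   ρ ^ 3 * x₁ ^ 4 * u,
   (x₁ ^ 5 * x₃ ^ 2 + x₁ * x₂ ^ 6) * u,
   (ρ * x₁ ^ 4 * x₃ ^ 2 + ρ * x₂ ^ 6) * u,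
   (x₁ ^ 4 * x₃ ^ 2 * x₄ + x₂ ^ 6 * x₄ + x₂ ^ 4 * x₃ ^ 3 + x₁ ^ 4 * x₂ ^ 2 * x₃ * B₁ ^ 2
     + x₁ ^ 6 * x₂ * C₂) * u}

abbrev E := P ⧸ J

def mk : P →+* E := Ideal.Quotient.mk J

/-! ### Auxiliary setup -/

def f₁ : P := x₂ ^ 4 + B₁ * x₁ ^ 4
def f₂ : P := x₃ ^ 4 + B₁ ^ 2 * x₂ ^ 4 + C₂ * x₁ ^ 4
def f₃ : P := x₄ ^ 2 + x₁ ^ 2 * C₃ + x₂ ^ 2 * C₂ + x₃ ^ 2 * B₁ ^ 2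
def s₅ : P := x₂ ^ 7 + x₁ ^ 6 * x₄ + x₁ ^ 4 * x₂ * x₃ ^ 2 + x₁ ^ 2 * x₂ ^ 4 * x₃
def s₉ : P := x₁ ^ 4 * x₃ ^ 2 + x₂ ^ 6
def s₁₀ : P := x₁ ^ 4 * x₃ ^ 2 * x₄ + x₂ ^ 6 * x₄ + x₂ ^ 4 * x₃ ^ 3
  + x₁ ^ 4 * x₂ ^ 2 * x₃ * B₁ ^ 2 + x₁ ^ 6 * x₂ * C₂

def G : Set P := {f₁, f₂, f₃, x₁ ^ 4, s₅, s₉, s₁₀}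

def M₀ : Ideal P := Ideal.span G

lemma hGf₁ : f₁ ∈ G := Set.mem_insert _ _
lemma hGf₂ : f₂ ∈ G := Set.mem_insert_of_mem _ (Set.mem_insert _ _)
lemma hGf₃ : f₃ ∈ G :=
  Set.mem_insert_of_mem _ (Set.mem_insert_of_mem _ (Set.mem_insert _ _))
lemma hGx₁ : x₁ ^ 4 ∈ G :=
  Set.mem_insert_of_mem _ (Set.mem_insert_of_mem _ (Set.mem_insert_of_mem _
    (Set.mem_insert _ _)))
lemma hGs₅ : s₅ ∈ G :=
  Set.mem_insert_of_mem _ (Set.mem_insert_of_mem _ (Set.mem_insert_of_mem _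
    (Set.mem_insert_of_mem _ (Set.mem_insert _ _))))
lemma hGs₉ : s₉ ∈ G :=
  Set.mem_insert_of_mem _ (Set.mem_insert_of_mem _ (Set.mem_insert_of_mem _
    (Set.mem_insert_of_mem _ (Set.mem_insert_of_mem _ (Set.mem_insert _ _)))))
lemma hGs₁₀ : s₁₀ ∈ G :=
  Set.mem_insert_of_mem _ (Set.mem_insert_of_mem _ (Set.mem_insert_of_mem _
    (Set.mem_insert_of_mem _ (Set.mem_insert_of_mem _ (Set.mem_insert_of_mem _ rfl)))))

/-- `J ≤ M₀`. -/
lemma J_le_M₀ : J ≤ M₀ := by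
  rw [J, Ideal.span_le]
  intro x hx
  simp only [Set.mem_insert_iff, Set.mem_singleton_iff] at hx
  rcases hx with rfl | rfl | rfl | rfl | rfl | rfl | rfl | rfl | rfl | rfl
  · exact Ideal.subset_span hGf₁
  · exact Ideal.subset_span hGf₂
  · exact Ideal.subset_span hGf₃
  · have h : x₁ ^ 7 * u = (x₁ ^ 3 * u) * x₁ ^ 4 := by ring
    rw [h]; exact Ideal.mul_mem_left _ _ (Ideal.subset_span hGx₁)
  · exact Ideal.mul_mem_right _ _ (Ideal.subset_span hGs₅)
  · have h : ρ * x₁ ^ 6 * u = (ρ * x₁ ^ 2 * u) * x₁ ^ 4 := by ring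
    rw [h]; exact Ideal.mul_mem_left _ _ (Ideal.subset_span hGx₁)
  · have h : ρ ^ 3 * x₁ ^ 4 * u = (ρ ^ 3 * u) * x₁ ^ 4 := by ring
    rw [h]; exact Ideal.mul_mem_left _ _ (Ideal.subset_span hGx₁)
  · have h : (x₁ ^ 5 * x₃ ^ 2 + x₁ * x₂ ^ 6) * u = (x₁ * u) * s₉ := by
      simp only [s₉]; ring
    rw [h]; exact Ideal.mul_mem_left _ _ (Ideal.subset_span hGs₉)
  · have h : (ρ * x₁ ^ 4 * x₃ ^ 2 + ρ * x₂ ^ 6) * u = (ρ * u) * s₉ := by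
      simp only [s₉]; ring
    rw [h]; exact Ideal.mul_mem_left _ _ (Ideal.subset_span hGs₉)
  · exact Ideal.mul_mem_right _ _ (Ideal.subset_span hGs₁₀)

/-- `M₀ ≤ J ⊔ (x₁⁴)`. -/
lemma M₀_le : M₀ ≤ J ⊔ Ideal.span {x₁ ^ 4} := by
  have hf₁J : f₁ ∈ J := Ideal.subset_span (Set.mem_insert _ _)
  have hx4 : x₁ ^ 4 ∈ Ideal.span ({x₁ ^ 4} : Set P) := Ideal.subset_span rfl
  rw [M₀, Ideal.span_le]
  intro x hx
  simp only [G, Set.mem_insert_iff, Set.mem_singleton_iff] at hx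
  rcases hx with rfl | rfl | rfl | rfl | rfl | rfl | rfl
  · exact Ideal.mem_sup_left hf₁J
  · exact Ideal.mem_sup_left (Ideal.subset_span (Set.mem_insert_of_mem _ (Set.mem_insert _ _)))
  · exact Ideal.mem_sup_left (Ideal.subset_span (Set.mem_insert_of_mem _
      (Set.mem_insert_of_mem _ (Set.mem_insert _ _))))
  · exact Ideal.mem_sup_right hx4
  · have h : s₅ = (x₂ ^ 3 + x₁ ^ 2 * x₃) * f₁
        + (x₁ ^ 2 * x₄ + x₂ * x₃ ^ 2 - B₁ * x₂ ^ 3 - B₁ * x₁ ^ 2 * x₃) * x₁ ^ 4 := by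
      simp only [s₅, f₁]; ring
    rw [h]
    exact add_mem (Ideal.mem_sup_left (Ideal.mul_mem_left _ _ hf₁J))
      (Ideal.mem_sup_right (Ideal.mul_mem_left _ _ hx4))
  · have h : s₉ = x₂ ^ 2 * f₁ + (x₃ ^ 2 - B₁ * x₂ ^ 2) * x₁ ^ 4 := by
      simp only [s₉, f₁]; ring
    rw [h]
    exact add_mem (Ideal.mem_sup_left (Ideal.mul_mem_left _ _ hf₁J))
      (Ideal.mem_sup_right (Ideal.mul_mem_left _ _ hx4))
  · have h : s₁₀ = (x₂ ^ 2 * x₄ + x₃ ^ 3) * f₁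
        + (x₃ ^ 2 * x₄ - B₁ * x₂ ^ 2 * x₄ - B₁ * x₃ ^ 3 + B₁ ^ 2 * x₂ ^ 2 * x₃
            + x₁ ^ 2 * x₂ * C₂) * x₁ ^ 4 := by
      simp only [s₁₀, f₁]; ring
    rw [h]
    exact add_mem (Ideal.mem_sup_left (Ideal.mul_mem_left _ _ hf₁J))
      (Ideal.mem_sup_right (Ideal.mul_mem_left _ _ hx4))

/-! ### ρ and u are regular modulo `M₀` -/

abbrev S' := MvPolynomial (ℕ ⊕ Fin 4) (ZMod 2)

def vEquiv : (ℕ ⊕ Fin 6) ≃ (Fin 2 ⊕ (ℕ ⊕ Fin 4)) where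
  toFun := Sum.elim (fun n => Sum.inr (Sum.inl n))
    ![Sum.inl 0, Sum.inr (Sum.inr 0), Sum.inr (Sum.inr 1), Sum.inr (Sum.inr 2),
      Sum.inr (Sum.inr 3), Sum.inl 1]
  invFun := Sum.elim ![Sum.inr 0, Sum.inr 5]
    (Sum.elim (fun n => Sum.inl n) ![Sum.inr 1, Sum.inr 2, Sum.inr 3, Sum.inr 4])
  left_inv := by
    rintro (n | i)
    · rfl
    · fin_cases i <;> rfl
  right_inv := by
    rintro (i | n | i)
    · fin_cases i <;> rfl
    · rfl
    · fin_cases i <;> rfl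

def Φ : P ≃ₐ[ZMod 2] MvPolynomial (Fin 2) S' :=
  (renameEquiv (ZMod 2) vEquiv).trans (sumAlgEquiv (ZMod 2) (Fin 2) (ℕ ⊕ Fin 4))

lemma vE_l (n : ℕ) : vEquiv (Sum.inl n) = Sum.inr (Sum.inl n) := rfl
lemma vE_r0 : vEquiv (Sum.inr 0) = Sum.inl 0 := rfl
lemma vE_r1 : vEquiv (Sum.inr 1) = Sum.inr (Sum.inr 0) := rfl
lemma vE_r2 : vEquiv (Sum.inr 2) = Sum.inr (Sum.inr 1) := rfl
lemma vE_r3 : vEquiv (Sum.inr 3) = Sum.inr (Sum.inr 2) := rfl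
lemma vE_r4 : vEquiv (Sum.inr 4) = Sum.inr (Sum.inr 3) := rfl
lemma vE_r5 : vEquiv (Sum.inr 5) = Sum.inl 1 := rfl

lemma Φρ : Φ ρ = X 0 := by simp [Φ, ρ, rename_X, vE_r0]
lemma Φu : Φ u = X 1 := by simp [Φ, u, rename_X, vE_r5]
lemma ΦB₁ : Φ B₁ = C (X (Sum.inl 0)) := by simp [Φ, B₁, rename_X, vE_l]
lemma ΦC₂ : Φ C₂ = C (X (Sum.inl 1)) := by simp [Φ, C₂, rename_X, vE_l]
lemma ΦC₃ : Φ C₃ = C (X (Sum.inl 2)) := by simp [Φ, C₃, rename_X, vE_l]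
lemma Φx₁ : Φ x₁ = C (X (Sum.inr 0)) := by simp [Φ, x₁, rename_X, vE_r1]
lemma Φx₂ : Φ x₂ = C (X (Sum.inr 1)) := by simp [Φ, x₂, rename_X, vE_r2]
lemma Φx₃ : Φ x₃ = C (X (Sum.inr 2)) := by simp [Φ, x₃, rename_X, vE_r3]
lemma Φx₄ : Φ x₄ = C (X (Sum.inr 3)) := by simp [Φ, x₄, rename_X, vE_r4]

-- primed generators in S'
def b₁ : S' := X (Sum.inl 0)
def c₂ : S' := X (Sum.inl 1)
def c₃ : S' := X (Sum.inl 2)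
def y₁ : S' := X (Sum.inr 0)
def y₂ : S' := X (Sum.inr 1)
def y₃ : S' := X (Sum.inr 2)
def y₄ : S' := X (Sum.inr 3)

def f₁' : S' := y₂ ^ 4 + b₁ * y₁ ^ 4
def f₂' : S' := y₃ ^ 4 + b₁ ^ 2 * y₂ ^ 4 + c₂ * y₁ ^ 4
def f₃' : S' := y₄ ^ 2 + y₁ ^ 2 * c₃ + y₂ ^ 2 * c₂ + y₃ ^ 2 * b₁ ^ 2
def s₅' : S' := y₂ ^ 7 + y₁ ^ 6 * y₄ + y₁ ^ 4 * y₂ * y₃ ^ 2 + y₁ ^ 2 * y₂ ^ 4 * y₃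
def s₉' : S' := y₁ ^ 4 * y₃ ^ 2 + y₂ ^ 6
def s₁₀' : S' := y₁ ^ 4 * y₃ ^ 2 * y₄ + y₂ ^ 6 * y₄ + y₂ ^ 4 * y₃ ^ 3
  + y₁ ^ 4 * y₂ ^ 2 * y₃ * b₁ ^ 2 + y₁ ^ 6 * y₂ * c₂

def G' : Set S' := {f₁', f₂', f₃', y₁ ^ 4, s₅', s₉', s₁₀'}

lemma Φf₁ : Φ f₁ = C f₁' := by
  simp only [f₁, f₁', b₁, y₁, y₂, map_add, map_mul, map_pow, ΦB₁, Φx₁, Φx₂, C_add, C_mul, C_pow]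
lemma Φf₂ : Φ f₂ = C f₂' := by
  simp only [f₂, f₂', b₁, c₂, y₁, y₂, y₃, map_add, map_mul, map_pow, ΦB₁, ΦC₂, Φx₁, Φx₂, Φx₃,
    C_add, C_mul, C_pow]
lemma Φf₃ : Φ f₃ = C f₃' := by
  simp only [f₃, f₃', b₁, c₂, c₃, y₁, y₂, y₃, y₄, map_add, map_mul, map_pow, ΦB₁, ΦC₂, ΦC₃,
    Φx₁, Φx₂, Φx₃, Φx₄, C_add, C_mul, C_pow]
lemma Φx₁4 : Φ (x₁ ^ 4) = C (y₁ ^ 4) := by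
  simp only [y₁, map_pow, Φx₁, C_pow]
lemma Φs₅ : Φ s₅ = C s₅' := by
  simp only [s₅, s₅', y₁, y₂, y₃, y₄, map_add, map_mul, map_pow, Φx₁, Φx₂, Φx₃, Φx₄,
    C_add, C_mul, C_pow]
lemma Φs₉ : Φ s₉ = C s₉' := by
  simp only [s₉, s₉', y₁, y₂, y₃, map_add, map_mul, map_pow, Φx₁, Φx₂, Φx₃, C_add, C_mul, C_pow]
lemma Φs₁₀ : Φ s₁₀ = C s₁₀' := by
  simp only [s₁₀, s₁₀', b₁, c₂, y₁, y₂, y₃, y₄, map_add, map_mul, map_pow, ΦB₁, ΦC₂,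
    Φx₁, Φx₂, Φx₃, Φx₄, C_add, C_mul, C_pow]

lemma map_M₀ : Ideal.map (Φ : P →+* MvPolynomial (Fin 2) S') M₀
    = Ideal.map (C : S' →+* MvPolynomial (Fin 2) S') (Ideal.span G') := by
  rw [M₀, Ideal.map_span, Ideal.map_span]
  congr 1
  simp only [G, G', Set.image_insert_eq, Set.image_singleton]
  rw [show ((Φ : P →+* MvPolynomial (Fin 2) S') : P → MvPolynomial (Fin 2) S') = (Φ : P → _)
      from rfl]
  rw [Φf₁, Φf₂, Φf₃, Φx₁4, Φs₅, Φs₉, Φs₁₀]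

/-- key regularity step: multiplication by `ρ⁷u` is injective modulo `M₀`. -/
lemma reg (q : P) (h : q * (ρ ^ 7 * u) ∈ M₀) : q ∈ M₀ := by
  set ΦR : P →+* MvPolynomial (Fin 2) S' := (Φ : P →+* MvPolynomial (Fin 2) S') with hΦR
  have hker : Ideal.map (C : S' →+* MvPolynomial (Fin 2) S') (Ideal.span G')
      = RingHom.ker (MvPolynomial.map (Ideal.Quotient.mk (Ideal.span G'))
          : MvPolynomial (Fin 2) S' →+* MvPolynomial (Fin 2) (S' ⧸ Ideal.span G')) := by
    rw [MvPolynomial.ker_map, Ideal.mk_ker]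
  have h1 : ΦR (q * (ρ ^ 7 * u)) ∈ Ideal.map ΦR M₀ := Ideal.mem_map_of_mem _ h
  rw [map_M₀, hker, RingHom.mem_ker] at h1
  have hRq : ΦR (q * (ρ ^ 7 * u)) = ΦR q * (X 0) ^ 7 * X 1 := by
    have : ΦR (q * (ρ ^ 7 * u)) = ΦR q * (ΦR ρ) ^ 7 * ΦR u := by
      rw [map_mul, map_mul, map_pow, mul_assoc]
    rw [this]
    have h2 : ΦR ρ = Φ ρ := rfl
    have h3 : ΦR u = Φ u := rfl
    rw [h2, h3, Φρ, Φu]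
  rw [hRq, map_mul, map_mul, map_pow, MvPolynomial.map_X, MvPolynomial.map_X] at h1
  -- h1 : A * X 0 ^ 7 * X 1 = 0
  set A := MvPolynomial.map (Ideal.Quotient.mk (Ideal.span G')) (ΦR q) with hA
  have h4 : (X 1 : MvPolynomial (Fin 2) (S' ⧸ Ideal.span G')) * (X 0 ^ 7 * A)
      = X 1 * 0 := by rw [mul_zero, ← h1]; ring
  have h5 := isRegular_X.left h4
  have h6 : (X 0 : MvPolynomial (Fin 2) (S' ⧸ Ideal.span G')) ^ 7 * A = X 0 ^ 7 * 0 := by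
    rw [mul_zero]; exact h5
  have h7 := (isRegular_X_pow (R := S' ⧸ Ideal.span G') (σ := Fin 2) (n := 0) 7).left h6
  -- so ΦR q ∈ ker, i.e. ∈ map ΦR M₀
  have h8 : ΦR q ∈ Ideal.map ΦR M₀ := by
    rw [map_M₀, hker, RingHom.mem_ker]; exact h7
  obtain ⟨x, hxM, hx⟩ := (Ideal.mem_map_iff_of_surjective ΦR Φ.surjective).1 h8
  have : x = q := Φ.injective hx
  rwa [← this]

lemma mk_zero {y : P} (hy : y ∈ J) : mk y = 0 := Ideal.Quotient.eq_zero_iff_mem.2 hy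

lemma mk_mem {y : P} (hy : mk y = 0) : y ∈ J := Ideal.Quotient.eq_zero_iff_mem.1 hy

theorem stmt_18 :
    ∀ e : E, e * mk (ρ ^ 7 * u) = 0 ↔ e ∈ Ideal.span {mk (x₁ ^ 4)} := by
  intro e
  obtain ⟨p, rfl⟩ := Ideal.Quotient.mk_surjective (I := J) e
  have mkdef : (Ideal.Quotient.mk J : P →+* E) = mk := rfl
  rw [mkdef]
  constructor
  · intro h
    have hJ : p * (ρ ^ 7 * u) ∈ J := by
      rw [← map_mul] at h
      exact mk_mem h
    have hp : p ∈ M₀ := reg p (J_le_M₀ hJ)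
    have hpT : p ∈ J ⊔ Ideal.span {x₁ ^ 4} := M₀_le hp
    rw [Submodule.mem_sup] at hpT
    obtain ⟨a, ha, b, hb, hab⟩ := hpT
    obtain ⟨cc, hcc⟩ := Ideal.mem_span_singleton'.1 hb
    have : mk p = mk cc * mk (x₁ ^ 4) := by
      rw [← hab, map_add, mk_zero ha, zero_add, ← hcc, map_mul]
    rw [this]
    exact Ideal.mul_mem_left _ _ (Ideal.subset_span rfl)
  · intro h
    obtain ⟨cc, hcc⟩ := Ideal.mem_span_singleton'.1 h
    rw [← hcc, mul_assoc, ← map_mul]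
    have hgen : ρ ^ 3 * x₁ ^ 4 * u ∈ J := by
      refine Ideal.subset_span ?_
      exact Set.mem_insert_of_mem _ (Set.mem_insert_of_mem _ (Set.mem_insert_of_mem _
        (Set.mem_insert_of_mem _ (Set.mem_insert_of_mem _ (Set.mem_insert_of_mem _
          (Set.mem_insert _ _))))))
    have hm : x₁ ^ 4 * (ρ ^ 7 * u) = ρ ^ 4 * (ρ ^ 3 * x₁ ^ 4 * u) := by ring
    rw [hm]
    have : mk (ρ ^ 4 * (ρ ^ 3 * x₁ ^ 4 * u)) = 0 := by
      rw [map_mul, mk_zero hgen, mul_zero]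
    rw [this, mul_zero]

end Stmt18

end
end
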